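/- Let n ≥ 5 and let C = (c_{ij}) be an n×n matrix over K with every entry nonzero. If Π_{i=1}^n c_{i,w(i)} = 1 for every even permutation w ∈ A_n, then c_{ij} = c_{i1}·c_{1j}/c_{11} for all 1 ≤ i, j ≤ n; in particular rank(C) = 1. -/

import Mathlib

/-! Normalise the entries by the diagonal, `B i j = C i j / C i i`; then every even permutation
has `B`-product `1` over its support. For `P p q = B p q * B q p`, the double transpositions
`(p q)(r s)` give `P p q * P r s = 1`, and with a fifth index this makes `P p q = P p r`. Hence `P`
takes a single value `x` on pairs with `x ^ 2 = 1`, while the two 3-cycles on `p, q, r` give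
`x ^ 3 = 1`; so `B q p = (B p q)⁻¹`, and a 3-cycle then reads `B p r = B p q * B q r`, which is
the rank-one relation. -/

open Matrix Finset Equiv

section EvenPermProducts

variable {ι G : Type*} [Fintype ι] [DecidableEq ι] [CommGroup G]

theorem exists_pair_notMem (s : Finset ι) (h : #s + 2 ≤ Fintype.card ι) :
    ∃ a b, a ∉ s ∧ b ∉ s ∧ a ≠ b := by
  have : 1 < #sᶜ := by rw [card_compl]; omega
  obtain ⟨a, ha, b, hb, hab⟩ := one_lt_card.1 this
  exact ⟨a, b, mem_compl.1 ha, mem_compl.1 hb, hab⟩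

section Normalized

variable {B : ι → ι → G} (hB1 : ∀ i, B i i = 1)
  (hB : ∀ σ : Perm ι, Perm.sign σ = 1 → ∏ i, B i (σ i) = 1)
include hB1 hB

theorem prod_eq_one_of_forall_notMem_apply_eq {σ : Perm ι} (hσ : Perm.sign σ = 1)
    {s : Finset ι} (hs : ∀ x ∉ s, σ x = x) : ∏ i ∈ s, B i (σ i) = 1 := by
  rw [← hB σ hσ]
  exact prod_subset (subset_univ s) fun x _ hx => by rw [hs x hx, hB1]

theorem prod_threeCycle_eq_one {p q r : ι} (hpq : p ≠ q) (hqr : q ≠ r) (hpr : p ≠ r) :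
    B p q * B q r * B r p = 1 := by
  have := prod_eq_one_of_forall_notMem_apply_eq hB1 hB (σ := swap p q * swap q r)
    (by simp [Perm.sign_mul, hpq, hqr]) (s := {p, q, r})
    (fun x hx => by simp_all [swap_apply_of_ne_of_ne])
  simpa [hpq, hpr, hqr, swap_apply_of_ne_of_ne, hpq.symm, hpr.symm, hqr.symm, mul_assoc]
    using this

theorem prod_swap_mul_swap_eq_one {p q r s : ι} (hpq : p ≠ q) (hpr : p ≠ r) (hps : p ≠ s)
    (hqr : q ≠ r) (hqs : q ≠ s) (hrs : r ≠ s) :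
    B p q * B q p * (B r s * B s r) = 1 := by
  have := prod_eq_one_of_forall_notMem_apply_eq hB1 hB (σ := swap p q * swap r s)
    (by simp [Perm.sign_mul, hpq, hrs]) (s := {p, q, r, s})
    (fun x hx => by simp_all [swap_apply_of_ne_of_ne])
  simpa [hpq, hpr, hqr, hps, hqs, hrs, swap_apply_of_ne_of_ne, hpq.symm, hpr.symm, hqr.symm,
    hps.symm, hqs.symm, hrs.symm, mul_assoc] using this

variable (hcard : 5 ≤ Fintype.card ι)
include hcard

theorem apply_mul_apply_symm_eq_of_ne {p q r : ι} (hpq : p ≠ q) (hpr : p ≠ r) :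
    B p q * B q p = B p r * B r p := by
  obtain ⟨s, u, hs, hu, hsu⟩ := exists_pair_notMem {p, q, r}
    (by have := card_le_three (a := p) (b := q) (c := r); omega)
  simp only [mem_insert, mem_singleton, not_or] at hs hu
  refine mul_right_cancel (b := B s u * B u s) ?_
  rw [prod_swap_mul_swap_eq_one hB1 hB hpq (Ne.symm hs.1) (Ne.symm hu.1) (Ne.symm hs.2.1)
      (Ne.symm hu.2.1) hsu,
    prod_swap_mul_swap_eq_one hB1 hB hpr (Ne.symm hs.1) (Ne.symm hu.1) (Ne.symm hs.2.2)
      (Ne.symm hu.2.2) hsu]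

theorem apply_mul_apply_symm_eq_one {p q : ι} (hpq : p ≠ q) : B p q * B q p = 1 := by
  obtain ⟨r, s, hr, hs, hrs⟩ := exists_pair_notMem {p, q}
    (by have := card_le_two (a := p) (b := q); omega)
  simp only [mem_insert, mem_singleton, not_or] at hr hs
  obtain ⟨hrp, hrq⟩ := hr
  generalize hx : B p q * B q p = x
  have hPpr : B p r * B r p = x := by
    rw [← apply_mul_apply_symm_eq_of_ne hB1 hB hcard hpq (Ne.symm hrp), hx]
  have hPqr : B q r * B r q = x := by
    rw [← apply_mul_apply_symm_eq_of_ne hB1 hB hcard (Ne.symm hpq) (Ne.symm hrq), mul_comm, hx]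
  have hPrs : B r s * B s r = x := by
    rw [apply_mul_apply_symm_eq_of_ne hB1 hB hcard hrs hrp, mul_comm, hPpr]
  have hsq : x * x = 1 := by
    have := prod_swap_mul_swap_eq_one hB1 hB hpq (Ne.symm hrp) (Ne.symm hs.1) (Ne.symm hrq)
      (Ne.symm hs.2) hrs
    rwa [hx, hPrs] at this
  have hcube : x ^ 3 = 1 := calc
    x ^ 3 = (B p q * B q p) * (B q r * B r q) * (B p r * B r p) := by
      rw [hx, hPqr, hPpr, pow_three, mul_assoc]
    _ = (B p q * B q r * B r p) * (B p r * B r q * B q p) := by ac_rfl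
    _ = 1 := by
      rw [prod_threeCycle_eq_one hB1 hB hpq (Ne.symm hrq) (Ne.symm hrp),
        prod_threeCycle_eq_one hB1 hB (Ne.symm hrp) hrq hpq, one_mul]
  calc x = x ^ 3 * (x * x)⁻¹ := by group
    _ = 1 := by rw [hcube, hsq, inv_one, one_mul]

theorem apply_eq_mul_apply (i j k : ι) : B i j = B i k * B k j := by
  rcases eq_or_ne i k with rfl | hik
  · rw [hB1, one_mul]
  rcases eq_or_ne k j with rfl | hkj
  · rw [hB1, mul_one]
  rcases eq_or_ne i j with rfl | hij
  · rw [hB1, apply_mul_apply_symm_eq_one hB1 hB hcard hik]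
  have h3 := prod_threeCycle_eq_one hB1 hB hik hkj hij
  rw [← apply_mul_apply_symm_eq_one hB1 hB hcard hij] at h3
  exact (mul_right_cancel h3).symm

end Normalized

theorem apply_mul_apply_self_eq_apply_mul_apply (hcard : 5 ≤ Fintype.card ι)
    {A : ι → ι → G} (hA : ∀ σ : Perm ι, Perm.sign σ = 1 → ∏ i, A i (σ i) = 1)
    (i j k : ι) :
    A i j * A k k = A i k * A k j := by
  have hB : ∀ σ : Perm ι, Perm.sign σ = 1 → ∏ i, A i (σ i) / A i i = 1 := fun σ hσ => by
    rw [prod_div_distrib, hA σ hσ, show ∏ i, A i i = 1 from hA 1 Perm.sign_one, div_one]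
  have h := apply_eq_mul_apply (B := fun i j => A i j / A i i) (fun i => div_self' _) hB hcard
    i j k
  rw [div_mul_div_comm, div_eq_div_iff_mul_eq_mul] at h
  rw [← mul_left_inj (A i i)]
  simpa only [mul_comm, mul_left_comm, mul_assoc] using h

end EvenPermProducts

theorem Matrix.rank_eq_one_of_apply_mul_apply_eq {m n K : Type*} [Fintype n] [Field K]
    {A : Matrix m n K} {k : m} {l : n} (hkl : A k l ≠ 0)
    (h : ∀ i j, A i j * A k l = A i l * A k j) : A.rank = 1 := by
  have hspan : Submodule.span K (Set.range A.col) = K ∙ A.col l := by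
    refine le_antisymm (Submodule.span_le.2 (Set.range_subset_iff.2 fun j => ?_))
      (Submodule.span_mono (Set.singleton_subset_iff.2 ⟨l, rfl⟩))
    refine Submodule.mem_span_singleton.2 ⟨A k j / A k l, funext fun i => ?_⟩
    simp only [col_apply, Pi.smul_apply, smul_eq_mul]
    rw [eq_comm, div_mul_eq_mul_div, eq_div_iff hkl, h, mul_comm]
  rw [rank_eq_finrank_span_cols, hspan, finrank_span_singleton]
  exact fun h0 => hkl (congrFun h0 k)

theorem rank_one_of_all_even_perm_products_one {K : Type*} [Field K]
    {n : ℕ} (hn : 5 ≤ n) (C : Matrix (Fin n) (Fin n) K)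
    (hC : ∀ i j : Fin n, C i j ≠ 0)
    (h : ∀ w : Equiv.Perm (Fin n), Equiv.Perm.sign w = 1 → ∏ i, C i (w i) = 1) :
    (∀ i j : Fin n, C i j = C i ⟨0, by omega⟩ * C ⟨0, by omega⟩ j / C ⟨0, by omega⟩ ⟨0, by omega⟩) ∧
      C.rank = 1 := by
  set z : Fin n := ⟨0, by omega⟩
  have hrel (i j : Fin n) : C i j * C z z = C i z * C z j := by
    simpa using congrArg Units.val <| apply_mul_apply_self_eq_apply_mul_apply
      (A := fun i j => Units.mk0 (C i j) (hC i j)) (by simpa using hn)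
      (fun σ hσ => Units.ext (by simpa using h σ hσ)) i j z
  exact ⟨fun i j => eq_div_of_mul_eq (hC z z) (hrel i j),
    Matrix.rank_eq_one_of_apply_mul_apply_eq (hC z z) hrel⟩
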